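/- Fix m and let J, Φ, Γ be m×m diagonal real matrices with positive diagonal entries, and let P, Q be m×m symmetric positive definite real matrices with (−J⁻¹Φ)ᵀP + P(−J⁻¹Φ) = −Q. Let η : [0,∞) → ℝ^{2m} be continuous and bounded, and let θ : [0,∞) → ℝ^m and Ξ̃ : [0,∞) → (m × 2m real matrices) be differentiable solutions of θ' = −J⁻¹Φθ − J⁻¹Ξ̃η and Ξ̃' = Γ(Pθ)ηᵀ. Then θ(t) → 0 as t → ∞. -/

import Mathlib

/-!
Along solutions of the error dynamics the Lyapunov function `V = θᵀPθ + tr(Ξᵀ J⁻¹ Γ⁻¹ Ξ)` has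
derivative `-θᵀQθ ≤ 0`: the Lyapunov equation takes care of the drift, and the adaptation law is
designed to cancel the cross term. So `V` is nonincreasing, which bounds `θ` and `Ξ`; as `η` is
bounded, `θ'` is bounded too and `θᵀQθ` is uniformly continuous on `[0, ∞)`. Since `V` is bounded
below, Barbalat's lemma gives `θᵀQθ → 0`, hence `θ → 0`.
-/

open Matrix Filter Set Topology

theorem Matrix.PosDef.exists_mul_norm_sq_le {n : Type*} [Fintype n] {M : Matrix n n ℝ}
    (hM : M.PosDef) : ∃ c > 0, ∀ x : n → ℝ, c * ‖x‖ ^ 2 ≤ x ⬝ᵥ M *ᵥ x := by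
  rcases isEmpty_or_nonempty n with hn | hn
  · exact ⟨1, one_pos, fun x => by simp [Subsingleton.elim x 0]⟩
  have hq : Continuous fun x : n → ℝ => x ⬝ᵥ M *ᵥ x := by fun_prop
  obtain ⟨u, hu, hmin⟩ := (isCompact_sphere (0 : n → ℝ) 1).exists_isMinOn
    (NormedSpace.sphere_nonempty.2 zero_le_one) hq.continuousOn
  have hu0 : u ≠ 0 := ne_zero_of_mem_unit_sphere ⟨u, hu⟩
  refine ⟨u ⬝ᵥ M *ᵥ u, by simpa using hM.dotProduct_mulVec_pos hu0, fun x => ?_⟩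
  rcases eq_or_ne x 0 with rfl | hx
  · simp
  have hxn : ‖x‖ ≠ 0 := norm_ne_zero_iff.2 hx
  have hy : ‖x‖⁻¹ • x ∈ Metric.sphere (0 : n → ℝ) 1 := by
    simp [norm_smul, hxn]
  -- the quadratic form is 2-homogeneous, so it suffices to compare on the unit sphere
  calc u ⬝ᵥ M *ᵥ u * ‖x‖ ^ 2 ≤ (‖x‖⁻¹ • x) ⬝ᵥ M *ᵥ (‖x‖⁻¹ • x) * ‖x‖ ^ 2 :=
        mul_le_mul_of_nonneg_right (hmin hy) (sq_nonneg _)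
    _ = x ⬝ᵥ M *ᵥ x := by
        simp only [mulVec_smul, smul_dotProduct, dotProduct_smul, smul_eq_mul]
        field_simp

theorem Matrix.PosDef.tendsto_zero_of_tendsto_dotProduct_mulVec {n α : Type*} [Fintype n]
    {M : Matrix n n ℝ} (hM : M.PosDef) {l : Filter α} {x : α → n → ℝ}
    (hx : Tendsto (fun a => x a ⬝ᵥ M *ᵥ x a) l (𝓝 0)) : Tendsto x l (𝓝 0) := by
  obtain ⟨c, hc, hcM⟩ := hM.exists_mul_norm_sq_le
  have hsq : Tendsto (fun a => ‖x a‖ ^ 2) l (𝓝 0) := by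
    refine squeeze_zero (fun a => sq_nonneg _) (fun a => ?_) (by simpa using hx.div_const c)
    rw [le_div_iff₀ hc, mul_comm]
    exact hcM (x a)
  have := (hsq.sqrt).congr fun a => Real.sqrt_sq (norm_nonneg (x a))
  exact tendsto_zero_iff_norm_tendsto_zero.2 (by simpa using this)

theorem HasDerivAt.dotProduct_mulVec {m n : Type*} [Fintype m] [Fintype n] (M : Matrix m n ℝ)
    {f : ℝ → m → ℝ} {g : ℝ → n → ℝ} {f' : m → ℝ} {g' : n → ℝ} {t : ℝ}
    (hf : HasDerivAt f f' t) (hg : HasDerivAt g g' t) :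
    HasDerivAt (fun s => f s ⬝ᵥ M *ᵥ g s) (f' ⬝ᵥ M *ᵥ g t + f t ⬝ᵥ M *ᵥ g') t := by
  have hMg : HasDerivAt (fun s => M *ᵥ g s) (M *ᵥ g') t :=
    M.mulVecLin.toContinuousLinearMap.hasFDerivAt.comp_hasDerivAt t hg
  simp only [dotProduct, ← Finset.sum_add_distrib]
  exact HasDerivAt.fun_sum fun i _ =>
    (hasDerivAt_pi.1 hf i).mul (hasDerivAt_pi.1 hMg i)

theorem Convex.uniformContinuousOn_of_norm_hasDerivAt_le {E : Type*} [NormedAddCommGroup E]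
    [NormedSpace ℝ E] {s : Set ℝ} (hs : Convex ℝ s) {f f' : ℝ → E} {K : ℝ}
    (hf : ∀ x ∈ s, HasDerivAt f (f' x) x) (hK : ∀ x ∈ s, ‖f' x‖ ≤ K) :
    UniformContinuousOn f s :=
  (hs.lipschitzOnWith_of_nnnorm_hasDerivWithin_le (C := K.toNNReal)
    (fun x hx => (hf x hx).hasDerivWithinAt)
    (fun x hx => by simpa [← NNReal.coe_le_coe] using (hK x hx).trans (le_max_left K 0))
    ).uniformContinuousOn

theorem Convex.antitoneOn_of_hasDerivAt_nonpos {D : Set ℝ} (hD : Convex ℝ D) {f f' : ℝ → ℝ}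
    (hf : ∀ x ∈ D, HasDerivAt f (f' x) x) (hf' : ∀ x ∈ D, f' x ≤ 0) : AntitoneOn f D :=
  antitoneOn_of_hasDerivWithinAt_nonpos hD (fun x hx => (hf x hx).continuousAt.continuousWithinAt)
    (fun x hx => (hf x (interior_subset hx)).hasDerivWithinAt)
    (fun x hx => hf' x (interior_subset hx))

theorem AntitoneOn.exists_tendsto_atTop {f : ℝ → ℝ} {a : ℝ} (hf : AntitoneOn f (Ici a))
    (hbdd : BddBelow (f '' Ici a)) : ∃ L, Tendsto f atTop (𝓝 L) := by
  have hanti : Antitone fun t => f (max t a) := fun s t hst =>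
    hf (le_max_right s a) (le_max_right t a) (max_le_max_right a hst)
  have hrange : BddBelow (range fun t => f (max t a)) :=
    hbdd.mono (range_subset_iff.2 fun t => mem_image_of_mem f (le_max_right t a))
  refine ⟨_, (tendsto_atTop_ciInf hanti hrange).congr' ?_⟩
  filter_upwards [eventually_ge_atTop a] with t ht
  rw [max_eq_left ht]

/-- Barbalat's lemma, in the form used for Lyapunov functions. -/
theorem tendsto_zero_of_hasDerivAt_neg_of_uniformContinuousOn {V g : ℝ → ℝ}
    (hV : ∀ t ∈ Ici (0 : ℝ), HasDerivAt V (-g t) t) (hVb : BddBelow (V '' Ici 0))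
    (hg0 : ∀ t ∈ Ici (0 : ℝ), 0 ≤ g t) (hg : UniformContinuousOn g (Ici 0)) :
    Tendsto g atTop (𝓝 0) := by
  obtain ⟨L, hL⟩ := ((convex_Ici 0).antitoneOn_of_hasDerivAt_nonpos hV
    fun t ht => neg_nonpos.2 (hg0 t ht)).exists_tendsto_atTop hVb
  refine tendsto_order.2 ⟨fun a ha => ?_, fun ε hε => ?_⟩
  · filter_upwards [eventually_ge_atTop 0] with t ht using ha.trans_le (hg0 t ht)
  obtain ⟨δ, hδ, hgδ⟩ := Metric.uniformContinuousOn_iff.1 hg (ε / 2) (half_pos hε)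
  -- once `ε ≤ g t`, uniform continuity keeps `g ≥ ε / 2` on `[t, t + δ / 2]`, where `V` must drop
  have hdrop : ∀ t ∈ Ici (0 : ℝ), ε ≤ g t → V (t + δ / 2) - V t ≤ -(ε / 2) * (δ / 2) := by
    intro t ht hεt
    have hD : ∀ s ∈ Icc t (t + δ / 2), s ∈ Ici (0 : ℝ) := fun s hs => le_trans ht hs.1
    have hgs : ∀ s ∈ Icc t (t + δ / 2), ε / 2 ≤ g s := by
      intro s hs
      have hst : dist s t < δ := by
        rw [Real.dist_eq, abs_of_nonneg (sub_nonneg.2 hs.1)]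
        linarith [hs.2]
      linarith [abs_lt.1 (hgδ s (hD s hs) t ht hst)]
    convert (convex_Icc t (t + δ / 2)).image_sub_le_mul_sub_of_deriv_le (C := -(ε / 2))
      (fun s hs => (hV s (hD s hs)).continuousAt.continuousWithinAt)
      (fun s hs => (hV s (hD s (interior_subset hs))).differentiableAt.differentiableWithinAt)
      (fun s hs => by
        rw [(hV s (hD s (interior_subset hs))).deriv]
        linarith [hgs s (interior_subset hs)])
      t (left_mem_Icc.2 (by linarith)) (t + δ / 2) (right_mem_Icc.2 (by linarith))
      (by linarith) using 2
    ring
  have hsmall : ∀ᶠ t in atTop, V t - V (t + δ / 2) < ε / 2 * (δ / 2) := by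
    have := hL.sub (hL.comp (tendsto_atTop_add_const_right atTop (δ / 2) tendsto_id))
    rw [sub_self] at this
    exact this.eventually_lt_const (by positivity)
  filter_upwards [hsmall, eventually_ge_atTop 0] with t hsmall ht
  by_contra! hεt
  linarith [hdrop t ht hεt]

namespace Matrix

variable {ι κ : Type*} [Fintype ι] [Fintype κ]

theorem IsSymm.dotProduct_mulVec_comm {P : Matrix ι ι ℝ} (hP : P.IsSymm) (v w : ι → ℝ) :
    v ⬝ᵥ P *ᵥ w = w ⬝ᵥ P *ᵥ v := by
  conv_lhs => rw [dotProduct_mulVec, ← hP.eq, vecMul_transpose]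
  exact dotProduct_comm _ _

theorem dotProduct_mulVec_add_of_lyapunov {A P Q : Matrix ι ι ℝ} (h : Aᵀ * P + P * A = -Q)
    (x : ι → ℝ) : (A *ᵥ x) ⬝ᵥ P *ᵥ x + x ⬝ᵥ P *ᵥ (A *ᵥ x) = -(x ⬝ᵥ Q *ᵥ x) := by
  have hA : (A *ᵥ x) ⬝ᵥ P *ᵥ x = x ⬝ᵥ (Aᵀ * P) *ᵥ x := by
    rw [← mulVec_mulVec, dotProduct_mulVec x Aᵀ, vecMul_transpose]
  rw [hA, mulVec_mulVec, ← dotProduct_add, ← add_mulVec, h, neg_mulVec, dotProduct_neg]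

theorem inv_diagonal_of_ne_zero [DecidableEq ι] {j : ι → ℝ} (hj : ∀ i, j i ≠ 0) :
    (diagonal j)⁻¹ = diagonal j⁻¹ :=
  inv_eq_right_inv (by rw [diagonal_mul_diagonal, ← diagonal_one]; simp [hj])

theorem IsDiag.sum_sum_inv_mul_vecMulVec [DecidableEq ι] {J Γ : Matrix ι ι ℝ} (hJd : J.IsDiag)
    (hΓd : Γ.IsDiag) (hJ : ∀ i, J i i ≠ 0) (hΓ : ∀ i, Γ i i ≠ 0) (u : ι → ℝ) (M : Matrix ι κ ℝ)
    (y : κ → ℝ) :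
    ∑ i, ∑ k, (J i i * Γ i i)⁻¹ * (M i k * vecMulVec (Γ *ᵥ u) y i k) = u ⬝ᵥ J⁻¹ *ᵥ (M *ᵥ y) := by
  obtain ⟨j, rfl⟩ : ∃ j, J = diagonal j := ⟨_, hJd.diagonal_diag.symm⟩
  obtain ⟨γ, rfl⟩ : ∃ γ, Γ = diagonal γ := ⟨_, hΓd.diagonal_diag.symm⟩
  simp only [diagonal_apply_eq] at hJ hΓ ⊢
  simp only [inv_diagonal_of_ne_zero hJ, dotProduct, mulVec_diagonal, vecMulVec_apply,
    Pi.inv_apply]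
  simp only [mulVec, dotProduct, Finset.mul_sum]
  refine Finset.sum_congr rfl fun i _ => Finset.sum_congr rfl fun k _ => ?_
  field_simp [hΓ i]

theorem exists_norm_neg_mulVec_sub_mulVec_mulVec_le (A B : Matrix ι ι ℝ) (R C : ℝ)
    (b : ι → ℝ) : ∃ K, ∀ (x : ι → ℝ) (M : Matrix ι κ ℝ) (y : κ → ℝ), ‖x‖ ≤ R →
      (∀ i k, |M i k| ≤ b i) → ‖y‖ ≤ C → ‖-(A *ᵥ x) - B *ᵥ (M *ᵥ y)‖ ≤ K := by
  have hbox : IsCompact (univ.pi fun i => univ.pi fun _ : κ => Icc (-b i) (b i)) :=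
    isCompact_univ_pi fun _ => isCompact_univ_pi fun _ => isCompact_Icc
  obtain ⟨K, hK⟩ := ((isCompact_closedBall (0 : ι → ℝ) R).prod
    (hbox.prod (isCompact_closedBall (0 : κ → ℝ) C))).exists_bound_of_continuousOn
    (f := fun p : (ι → ℝ) × Matrix ι κ ℝ × (κ → ℝ) => -(A *ᵥ p.1) - B *ᵥ (p.2.1 *ᵥ p.2.2))
    (by fun_prop)
  refine ⟨K, fun x M y hx hM hy => hK (x, M, y) ⟨?_, ?_, ?_⟩⟩
  · simpa using hx
  · exact fun i _ k _ => abs_le.1 (hM i k)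
  · simpa using hy

end Matrix

section AdaptiveLyapunov

variable {ι κ : Type*} [Fintype ι] [Fintype κ]

/-- The paper's `θᵀ P θ + tr(Ξᵀ J⁻¹ Γ⁻¹ Ξ)`, written out for diagonal `J` and `Γ`. -/
noncomputable def adaptiveLyapunov (J Γ P : Matrix ι ι ℝ) (x : ι → ℝ) (M : Matrix ι κ ℝ) : ℝ :=
  x ⬝ᵥ P *ᵥ x + ∑ i, ∑ k, (J i i * Γ i i)⁻¹ * M i k ^ 2

variable {J Γ P : Matrix ι ι ℝ}

theorem HasDerivAt.adaptiveLyapunov {θ : ℝ → ι → ℝ} {Ξ : ℝ → Matrix ι κ ℝ} {θ' : ι → ℝ}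
    {Ξ' : Matrix ι κ ℝ} {t : ℝ} (hθ : HasDerivAt θ θ' t)
    (hΞ : ∀ i k, HasDerivAt (fun s => Ξ s i k) (Ξ' i k) t) :
    HasDerivAt (fun s => adaptiveLyapunov J Γ P (θ s) (Ξ s))
      (θ' ⬝ᵥ P *ᵥ θ t + θ t ⬝ᵥ P *ᵥ θ' +
        2 * ∑ i, ∑ k, (J i i * Γ i i)⁻¹ * (Ξ t i k * Ξ' i k)) t := by
  refine (hθ.dotProduct_mulVec P hθ).add ?_
  simp only [Finset.mul_sum]
  refine HasDerivAt.fun_sum fun i _ => HasDerivAt.fun_sum fun k _ => ?_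
  exact (((hΞ i k).fun_pow 2).const_mul _).congr_deriv (by push_cast; ring)

theorem dotProduct_mulVec_le_adaptiveLyapunov (hJ : ∀ i, 0 < J i i) (hΓ : ∀ i, 0 < Γ i i)
    (x : ι → ℝ) (M : Matrix ι κ ℝ) : x ⬝ᵥ P *ᵥ x ≤ adaptiveLyapunov J Γ P x M :=
  le_add_of_nonneg_right <| Finset.sum_nonneg fun i _ => Finset.sum_nonneg fun k _ => by
    have := hJ i; have := hΓ i; positivity

theorem inv_mul_sq_le_adaptiveLyapunov (hJ : ∀ i, 0 < J i i) (hΓ : ∀ i, 0 < Γ i i)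
    (hP : P.PosSemidef) (x : ι → ℝ) (M : Matrix ι κ ℝ) (i : ι) (k : κ) :
    (J i i * Γ i i)⁻¹ * M i k ^ 2 ≤ adaptiveLyapunov J Γ P x M := by
  have hD : ∀ i k, 0 ≤ (J i i * Γ i i)⁻¹ * M i k ^ 2 := fun i k => by
    have := hJ i; have := hΓ i; positivity
  refine le_add_of_nonneg_of_le (by simpa using hP.dotProduct_mulVec_nonneg x) ?_
  exact (Finset.single_le_sum (fun k _ => hD i k) (Finset.mem_univ k)).trans
    (Finset.single_le_sum (f := fun i => ∑ k, (J i i * Γ i i)⁻¹ * M i k ^ 2)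
      (fun i _ => Finset.sum_nonneg fun k _ => hD i k) (Finset.mem_univ i))

theorem adaptiveLyapunov_nonneg (hJ : ∀ i, 0 < J i i) (hΓ : ∀ i, 0 < Γ i i)
    (hP : P.PosSemidef) (x : ι → ℝ) (M : Matrix ι κ ℝ) : 0 ≤ adaptiveLyapunov J Γ P x M :=
  (by simpa using hP.dotProduct_mulVec_nonneg x : 0 ≤ x ⬝ᵥ P *ᵥ x).trans
    (dotProduct_mulVec_le_adaptiveLyapunov hJ hΓ x M)

theorem exists_norm_le_of_adaptiveLyapunov_le (hJ : ∀ i, 0 < J i i) (hΓ : ∀ i, 0 < Γ i i)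
    (hP : P.PosDef) (c : ℝ) :
    ∃ R, ∀ (x : ι → ℝ) (M : Matrix ι κ ℝ), adaptiveLyapunov J Γ P x M ≤ c → ‖x‖ ≤ R := by
  obtain ⟨a, ha, haP⟩ := hP.exists_mul_norm_sq_le
  refine ⟨√(c / a), fun x M hc => ?_⟩
  refine Real.le_sqrt_of_sq_le ((le_div_iff₀ ha).2 ?_)
  rw [mul_comm]
  exact ((haP x).trans (dotProduct_mulVec_le_adaptiveLyapunov hJ hΓ x M)).trans hc

theorem abs_le_of_adaptiveLyapunov_le (hJ : ∀ i, 0 < J i i) (hΓ : ∀ i, 0 < Γ i i)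
    (hP : P.PosSemidef) {c : ℝ} {x : ι → ℝ} {M : Matrix ι κ ℝ}
    (hc : adaptiveLyapunov J Γ P x M ≤ c) (i : ι) (k : κ) : |M i k| ≤ √(c * (J i i * Γ i i)) := by
  have hJΓ : 0 < J i i * Γ i i := mul_pos (hJ i) (hΓ i)
  refine Real.abs_le_sqrt ?_
  have := (inv_mul_sq_le_adaptiveLyapunov hJ hΓ hP x M i k).trans hc
  rwa [inv_mul_le_iff₀ hJΓ, mul_comm] at this

theorem hasDerivAt_adaptiveLyapunov [DecidableEq ι] {Φ Q : Matrix ι ι ℝ} (hJd : J.IsDiag)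
    (hΓd : Γ.IsDiag) (hJ : ∀ i, J i i ≠ 0) (hΓ : ∀ i, Γ i i ≠ 0) (hP : P.IsSymm)
    (hLyap : (-(J⁻¹ * Φ))ᵀ * P + P * (-(J⁻¹ * Φ)) = -Q) {θ : ℝ → ι → ℝ}
    {Ξ : ℝ → Matrix ι κ ℝ} {η : ℝ → κ → ℝ} {t : ℝ}
    (hθ : HasDerivAt θ (-((J⁻¹ * Φ) *ᵥ θ t) - J⁻¹ *ᵥ (Ξ t *ᵥ η t)) t)
    (hΞ : ∀ i k, HasDerivAt (fun s => Ξ s i k) (vecMulVec (Γ *ᵥ P *ᵥ θ t) (η t) i k) t) :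
    HasDerivAt (fun s => adaptiveLyapunov J Γ P (θ s) (Ξ s)) (-(θ t ⬝ᵥ Q *ᵥ θ t)) t := by
  refine (hθ.adaptiveLyapunov hΞ).congr_deriv ?_
  set x := θ t
  set v := J⁻¹ *ᵥ (Ξ t *ᵥ η t)
  have hdrift := dotProduct_mulVec_add_of_lyapunov hLyap x
  -- the adaptation law is chosen so that the gradient term cancels the cross term `2 xᵀ P v`
  have hadapt : ∑ i, ∑ k, (J i i * Γ i i)⁻¹ * (Ξ t i k * vecMulVec (Γ *ᵥ P *ᵥ x) (η t) i k)
      = x ⬝ᵥ P *ᵥ v := by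
    rw [hJd.sum_sum_inv_mul_vecMulVec hΓd hJ hΓ, dotProduct_comm, hP.dotProduct_mulVec_comm]
  rw [hadapt, sub_dotProduct, mulVec_sub, dotProduct_sub, ← neg_mulVec,
    hP.dotProduct_mulVec_comm v x]
  linarith

end AdaptiveLyapunov

theorem stmt_7_general (m : ℕ) (J Φ Γ : Matrix (Fin m) (Fin m) ℝ)
    (hJd : J.IsDiag) (hΓd : Γ.IsDiag)
    (hJpos : ∀ i, 0 < J i i) (hΓpos : ∀ i, 0 < Γ i i)
    (P Q : Matrix (Fin m) (Fin m) ℝ) (hP : P.PosDef) (hQ : Q.PosDef)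
    (hLyap : (-(J⁻¹ * Φ))ᵀ * P + P * (-(J⁻¹ * Φ)) = -Q)
    (η : ℝ → Fin (2 * m) → ℝ)
    (hηb : ∃ C, ∀ t ≥ (0 : ℝ), ‖η t‖ ≤ C)
    (θ : ℝ → Fin m → ℝ) (Ξ : ℝ → Matrix (Fin m) (Fin (2 * m)) ℝ)
    (hθ : ∀ t ≥ (0 : ℝ), HasDerivAt θ
      (-((J⁻¹ * Φ).mulVec (θ t)) - J⁻¹.mulVec ((Ξ t).mulVec (η t))) t)
    (hΞ : ∀ t ≥ (0 : ℝ), ∀ i j, HasDerivAt (fun s => Ξ s i j)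
      ((Matrix.vecMulVec (Γ.mulVec (P.mulVec (θ t))) (η t)) i j) t) :
    Tendsto θ atTop (nhds 0) := by
  obtain ⟨C, hC⟩ := hηb
  set V := fun t => adaptiveLyapunov J Γ P (θ t) (Ξ t)
  have hQnonneg : ∀ x, 0 ≤ x ⬝ᵥ Q *ᵥ x := by simpa using hQ.posSemidef.dotProduct_mulVec_nonneg
  have hV : ∀ t ∈ Ici (0 : ℝ), HasDerivAt V (-(θ t ⬝ᵥ Q *ᵥ θ t)) t := fun t ht =>
    hasDerivAt_adaptiveLyapunov hJd hΓd (fun i => (hJpos i).ne') (fun i => (hΓpos i).ne')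
      (isHermitian_iff_isSymm.1 hP.isHermitian) hLyap (hθ t ht) (hΞ t ht)
  have hVle : ∀ t ∈ Ici (0 : ℝ), V t ≤ V 0 := fun t ht =>
    (convex_Ici 0).antitoneOn_of_hasDerivAt_nonpos hV (fun s _ => neg_nonpos.2 (hQnonneg _))
      self_mem_Ici ht ht
  obtain ⟨R, hR⟩ :=
    exists_norm_le_of_adaptiveLyapunov_le (κ := Fin (2 * m)) hJpos hΓpos hP (V 0)
  obtain ⟨K, hK⟩ := exists_norm_neg_mulVec_sub_mulVec_mulVec_le (κ := Fin (2 * m))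
    (J⁻¹ * Φ) J⁻¹ R C fun i => √(V 0 * (J i i * Γ i i))
  have hθu : UniformContinuousOn θ (Ici 0) :=
    (convex_Ici 0).uniformContinuousOn_of_norm_hasDerivAt_le hθ fun t ht =>
      hK _ _ _ (hR _ _ (hVle t ht))
        (abs_le_of_adaptiveLyapunov_le hJpos hΓpos hP.posSemidef (hVle t ht)) (hC t ht)
  have hqu : UniformContinuousOn (fun t => θ t ⬝ᵥ Q *ᵥ θ t) (Ici 0) :=
    ((isCompact_closedBall 0 R).uniformContinuousOn_of_continuous
      (f := fun x => x ⬝ᵥ Q *ᵥ x) (by fun_prop)).comp hθu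
      fun t ht => mem_closedBall_zero_iff.2 (hR _ _ (hVle t ht))
  have hVbdd : BddBelow (V '' Ici 0) := ⟨0, by
    rintro _ ⟨t, -, rfl⟩
    exact adaptiveLyapunov_nonneg hJpos hΓpos hP.posSemidef _ _⟩
  exact hQ.tendsto_zero_of_tendsto_dotProduct_mulVec
    (tendsto_zero_of_hasDerivAt_neg_of_uniformContinuousOn hV hVbdd (fun t _ => hQnonneg _) hqu)

/-- Convergence conclusion of Theorem 1 (global asymptotic synchronization in
the SPR regime): for bounded continuous regressor `η` and solutions of the
adaptive error dynamics on `[0,∞)`, the composite error `θ(t) → 0`. -/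
theorem stmt_7 (m : ℕ) (J Φ Γ : Matrix (Fin m) (Fin m) ℝ)
    (hJd : J.IsDiag) (hΦd : Φ.IsDiag) (hΓd : Γ.IsDiag)
    (hJpos : ∀ i, 0 < J i i) (hΦpos : ∀ i, 0 < Φ i i) (hΓpos : ∀ i, 0 < Γ i i)
    (P Q : Matrix (Fin m) (Fin m) ℝ) (hP : P.PosDef) (hQ : Q.PosDef)
    (hLyap : (-(J⁻¹ * Φ))ᵀ * P + P * (-(J⁻¹ * Φ)) = -Q)
    (η : ℝ → Fin (2 * m) → ℝ)
    (hηc : ContinuousOn η (Set.Ici 0))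
    (hηb : ∃ C, ∀ t ≥ (0 : ℝ), ‖η t‖ ≤ C)
    (θ : ℝ → Fin m → ℝ) (Ξ : ℝ → Matrix (Fin m) (Fin (2 * m)) ℝ)
    (hθ : ∀ t ≥ (0 : ℝ), HasDerivAt θ
      (-((J⁻¹ * Φ).mulVec (θ t)) - J⁻¹.mulVec ((Ξ t).mulVec (η t))) t)
    (hΞ : ∀ t ≥ (0 : ℝ), ∀ i j, HasDerivAt (fun s => Ξ s i j)
      ((Matrix.vecMulVec (Γ.mulVec (P.mulVec (θ t))) (η t)) i j) t) :
    Tendsto θ atTop (nhds 0) :=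
  stmt_7_general m J Φ Γ hJd hΓd hJpos hΓpos P Q hP hQ hLyap η hηb θ Ξ hθ hΞ
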